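/- Let $k$ be a field and $A = k[s,t]/(st)$ graded with $|s|=1$, $|t|=-1$. Let $(m,I)$ and $(m',I')$ be indices with $\Sigma^n M(m,I) \cong \Sigma^{n'} M(m',I')$ as graded $A$-modules. Then $n = n'$, $m = m'$, and $I = I'$. -/

import Mathlib

open scoped Classical

namespace Paper

variable (k : Type) [Field k]

/-- A nonnegatively graded module over `A = k[s,t]/(st)`, given componentwise. -/
structure GM where
  M : ℕ → Type
  [acg : ∀ i, AddCommGroup (M i)]
  [mod : ∀ i, Module k (M i)]
  s : ∀ i, M i →ₗ[k] M (i + 1)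
  t : ∀ i, M (i + 1) →ₗ[k] M i
  ts : ∀ i x, t i (s i x) = 0
  st : ∀ i x, s i (t i x) = 0

attribute [instance] GM.acg GM.mod

variable {k}

/-- Morphisms of graded `A`-modules. -/
structure Hom (M N : GM k) where
  f : ∀ i, M.M i →ₗ[k] N.M i
  comm_s : ∀ i x, f (i + 1) (M.s i x) = N.s i (f i x)
  comm_t : ∀ i x, f i (M.t i x) = N.t i (f (i + 1) x)

/-- Isomorphism of graded `A`-modules. -/
def GMIso (M N : GM k) : Prop := ∃ f : Hom M N, ∀ i, Function.Bijective (f.f i)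

/-- A morphism is (componentwise) injective. -/
def InjHom {M N : GM k} (f : Hom M N) : Prop := ∀ i, Function.Injective (f.f i)

/-- Purity of (the image of) a morphism, via the concrete characterization
`sN_i ⊓ P_{i+1} = sP_i` and `tN_{i+1} ⊓ P_i = tP_{i+1}`. -/
def IsPure {M N : GM k} (f : Hom M N) : Prop :=
  ∀ i,
    LinearMap.range (N.s i) ⊓ LinearMap.range (f.f (i + 1)) =
      LinearMap.range ((N.s i).comp (f.f i)) ∧
    LinearMap.range (N.t i) ⊓ LinearMap.range (f.f i) =
      LinearMap.range ((N.t i).comp (f.f (i + 1)))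

/-- Index `(m, I)` of a string module: `0 ≤ m ≤ ∞` and `I ⊆ {1, …, m}`. -/
structure StringIndex where
  m : ℕ∞
  I : Set ℕ
  hI : ∀ i ∈ I, 1 ≤ i ∧ (i : ℕ∞) ≤ m

variable (k)

/-- Degree-`i` component of the `n`-fold suspension of the string module `M(m,I)`:
a copy of `k` if `n ≤ i ≤ n + m`, and `0` otherwise. -/
def SC (n : ℕ) (σ : StringIndex) (i : ℕ) : Submodule k k :=
  if n ≤ i ∧ (i : ℕ∞) ≤ (n : ℕ∞) + σ.m then ⊤ else ⊥

lemma SC_top (n : ℕ) (σ : StringIndex) (i : ℕ) (h1 : n ≤ i)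
    (h2 : (i : ℕ∞) ≤ (n : ℕ∞) + σ.m) : SC k n σ i = ⊤ := by
  simp [SC, h1, h2]

/-- The `s`-multiplication on the suspended string module. -/
noncomputable def smap (n : ℕ) (σ : StringIndex) (i : ℕ) :
    SC k n σ i →ₗ[k] SC k n σ (i + 1) :=
  if h : ((i + 1 : ℕ) : ℕ∞) ≤ (n : ℕ∞) + σ.m ∧ (i + 1 - n) ∈ σ.I then
    Submodule.inclusion (by
      have h1 : 1 ≤ i + 1 - n := (σ.hI _ h.2).1
      have hn : n ≤ i + 1 := by omega
      rw [SC_top k n σ (i + 1) hn h.1]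
      exact le_top)
  else 0

/-- The `t`-multiplication on the suspended string module. -/
noncomputable def tmap (n : ℕ) (σ : StringIndex) (i : ℕ) :
    SC k n σ (i + 1) →ₗ[k] SC k n σ i :=
  if h : n ≤ i ∧ (i + 1 - n) ∉ σ.I then
    Submodule.inclusion (by
      by_cases hc : n ≤ i + 1 ∧ ((i + 1 : ℕ) : ℕ∞) ≤ (n : ℕ∞) + σ.m
      · have hi : (i : ℕ∞) ≤ (n : ℕ∞) + σ.m :=
          le_trans (by exact_mod_cast Nat.le_succ i) hc.2
        rw [SC_top k n σ i h.1 hi]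
        exact le_top
      · have hcc : ¬(((i + 1 : ℕ) : ℕ∞) ≤ (n : ℕ∞) + σ.m) :=
          fun hh => hc ⟨by omega, hh⟩
        have : SC k n σ (i + 1) = ⊥ := by
          rw [SC, if_neg (fun hh => hcc hh.2)]
        rw [this]; exact bot_le)
  else 0

/-- The `n`-fold suspension `Σⁿ M(m, I)` of the string module `M(m, I)`. -/
noncomputable def SM (n : ℕ) (σ : StringIndex) : GM k where
  M i := SC k n σ i
  s i := smap k n σ i
  t i := tmap k n σ i
  ts i x := by
    by_cases h : ((i + 1 : ℕ) : ℕ∞) ≤ (n : ℕ∞) + σ.m ∧ (i + 1 - n) ∈ σ.I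
    · have h' : ¬(n ≤ i ∧ (i + 1 - n) ∉ σ.I) := fun hc => hc.2 h.2
      simp only [tmap, dif_neg h', LinearMap.zero_apply]
    · simp only [smap, dif_neg h, LinearMap.zero_apply, map_zero]
  st i x := by
    by_cases h : n ≤ i ∧ (i + 1 - n) ∉ σ.I
    · have h' : ¬(((i + 1 : ℕ) : ℕ∞) ≤ (n : ℕ∞) + σ.m ∧ (i + 1 - n) ∈ σ.I) :=
        fun hc => h.2 hc.2
      simp only [smap, dif_neg h', LinearMap.zero_apply]
    · simp only [tmap, dif_neg h, LinearMap.zero_apply, map_zero]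

/-- The defining generator `x_i` of the (suspended) string module. -/
def xg (n : ℕ) (σ : StringIndex) (i : ℕ) (h1 : n ≤ i)
    (h2 : (i : ℕ∞) ≤ (n : ℕ∞) + σ.m) : SC k n σ i :=
  ⟨1, by rw [SC_top k n σ i h1 h2]; trivial⟩

variable {k}

/-- A graded module is nontrivial. -/
def Nontriv (M : GM k) : Prop := ∃ i, ∃ x : M.M i, x ≠ 0

/-- Binary direct sum of graded `A`-modules. -/
def dsum (M N : GM k) : GM k where
  M i := M.M i × N.M i
  s i := (M.s i).prodMap (N.s i)
  t i := (M.t i).prodMap (N.t i)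
  ts i x := by cases x with | mk a b => simp [M.ts, N.ts, Prod.ext_iff]
  st i x := by cases x with | mk a b => simp [M.st, N.st, Prod.ext_iff]

/-- Indecomposability of a graded `A`-module. -/
def Indec (M : GM k) : Prop :=
  Nontriv M ∧ ∀ N P : GM k, GMIso M (dsum N P) → ¬(Nontriv N ∧ Nontriv P)

/-- Direct sum of a family of graded `A`-modules. -/
noncomputable def gdsum {ι : Type} (F : ι → GM k) : GM k where
  M i := Π₀ j : ι, (F j).M i
  s i := DFinsupp.mapRange.linearMap (fun j => (F j).s i)
  t i := DFinsupp.mapRange.linearMap (fun j => (F j).t i)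
  ts i x := by
    ext j
    simp [(F j).ts]
  st i x := by
    ext j
    simp [(F j).st]

/-- The (lexicographic-type) well-order on string indices: `t` before `s`. -/
def idxLE (σ τ : StringIndex) : Prop :=
  (σ.m ≤ τ.m ∧ τ.I ∩ {j | (j : ℕ∞) ≤ σ.m} = σ.I) ∨
  (∃ i ∈ τ.I, i ∉ σ.I ∧ σ.I ∩ {j | j < i} = τ.I ∩ {j | j < i})

end Paper

namespace Paper

lemma SC_bot' (k : Type) [Field k] (n : ℕ) (σ : StringIndex) (i : ℕ)
    (h : ¬(n ≤ i ∧ (i : ℕ∞) ≤ (n : ℕ∞) + σ.m)) : SC k n σ i = ⊥ := by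
  simp only [SC, if_neg h]

lemma xg_ne_zero (k : Type) [Field k] (n : ℕ) (σ : StringIndex) (i : ℕ) (h1 : n ≤ i)
    (h2 : (i : ℕ∞) ≤ (n : ℕ∞) + σ.m) : xg k n σ i h1 h2 ≠ 0 := by
  intro h
  have := congrArg (Subtype.val) h
  simp [xg] at this

lemma SM_s_eq (k : Type) [Field k] (n : ℕ) (σ : StringIndex) (i : ℕ) :
    (SM k n σ).s i = smap k n σ i := rfl

/-- two suspended string modules are isomorphic only if their
indices agree: `Σⁿ M(m,I) ≅ Σ^{n'} M(m',I')` implies `n = n'`, `m = m'`,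
`I = I'`. -/
theorem suspended_string_modules_iso_iff_eq
    (k : Type) [Field k] (n n' : ℕ) (σ σ' : StringIndex)
    (hiso : GMIso (SM k n σ) (SM k n' σ')) :
    n = n' ∧ σ = σ' := by
  obtain ⟨f, hbij⟩ := hiso
  have key : ∀ i, ((n ≤ i ∧ (i : ℕ∞) ≤ (n : ℕ∞) + σ.m) ↔
      (n' ≤ i ∧ (i : ℕ∞) ≤ (n' : ℕ∞) + σ'.m)) := by
    intro i
    constructor
    · intro h
      by_contra h'
      have hb : SC k n' σ' i = ⊥ := SC_bot' k n' σ' i h'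
      set x := xg k n σ i h.1 h.2 with hxdef
      have h0 : f.f i x = 0 := by
        apply Subtype.ext
        have hm := (Submodule.eq_bot_iff _).mp hb _ (f.f i x).2
        exact hm.trans rfl
      have hx0 : x = 0 := (hbij i).1 (h0.trans (map_zero (f.f i)).symm)
      exact xg_ne_zero k n σ i h.1 h.2 hx0
    · intro h
      by_contra h'
      have hb : SC k n σ i = ⊥ := SC_bot' k n σ i h'
      obtain ⟨x, hx⟩ := (hbij i).2 (xg k n' σ' i h.1 h.2)
      have h0 : x = 0 := by
        apply Subtype.ext
        have hm := (Submodule.eq_bot_iff _).mp hb _ x.2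
        exact hm.trans rfl
      rw [h0, map_zero] at hx
      exact xg_ne_zero k n' σ' i h.1 h.2 hx.symm
  have hn : n = n' := by
    have h1 := (key n).1 ⟨le_refl n, le_self_add⟩
    have h2 := (key n').2 ⟨le_refl n', le_self_add⟩
    omega
  subst hn
  have hmle : ∀ (τ τ' : StringIndex),
      (∀ i, ((n ≤ i ∧ (i : ℕ∞) ≤ (n : ℕ∞) + τ.m) ↔
        (n ≤ i ∧ (i : ℕ∞) ≤ (n : ℕ∞) + τ'.m))) → τ.m ≤ τ'.m := by
    intro τ τ' hk
    by_contra hlt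
    push_neg at hlt
    obtain ⟨c, hc⟩ := WithTop.ne_top_iff_exists.mp (ne_top_of_lt hlt)
    have hc' : (c : ℕ∞) = τ'.m := hc
    have hlt' : (c : ℕ∞) < τ.m := lt_of_le_of_lt hc'.le hlt
    have hcc : (c : ℕ∞) + 1 ≤ τ.m := Order.add_one_le_of_lt hlt'
    have h1 : ((n + c + 1 : ℕ) : ℕ∞) ≤ (n : ℕ∞) + τ.m := by
      push_cast
      calc ((n : ℕ∞) + c + 1) = (n : ℕ∞) + ((c : ℕ∞) + 1) := by ring
        _ ≤ (n : ℕ∞) + τ.m := add_le_add le_rfl hcc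
    have h2 := (hk (n + c + 1)).1 ⟨by omega, h1⟩
    have h3 := h2.2
    rw [← hc'] at h3
    have h4 : ((n + c + 1 : ℕ) : ℕ∞) ≤ ((n + c : ℕ) : ℕ∞) := by push_cast; push_cast at h3; exact h3
    have := Nat.cast_le (α := ℕ∞) |>.mp h4
    omega
  have hm : σ.m = σ'.m :=
    le_antisymm (hmle σ σ' key) (hmle σ' σ fun i => (key i).symm)
  have hIeq : σ.I = σ'.I := by
    ext j
    constructor
    · intro hj
      obtain ⟨hj1, hj2⟩ := σ.hI j hj
      set i := n + (j - 1) with hidef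
      have hi1 : i + 1 = n + j := by omega
      have hsub : i + 1 - n = j := by omega
      have hsc1 : ((i + 1 : ℕ) : ℕ∞) ≤ (n : ℕ∞) + σ.m := by
        rw [hi1]; push_cast; exact add_le_add le_rfl hj2
      have hcond : ((i + 1 : ℕ) : ℕ∞) ≤ (n : ℕ∞) + σ.m ∧ (i + 1 - n) ∈ σ.I :=
        ⟨hsc1, hsub ▸ hj⟩
      have hni : n ≤ i := by omega
      have hisc : (i : ℕ∞) ≤ (n : ℕ∞) + σ.m :=
        le_trans (by exact_mod_cast Nat.le_succ i) hsc1
      set x := xg k n σ i hni hisc with hxdef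
      have hval : ((smap k n σ i x : k)) = 1 := by
        simp only [smap, dif_pos hcond, Submodule.coe_inclusion]
        rfl
      have hne : f.f (i + 1) (smap k n σ i x) ≠ 0 := by
        intro h0
        have hz := (hbij (i + 1)).1 (h0.trans (map_zero (f.f (i + 1))).symm)
        have hv := congrArg Subtype.val hz
        rw [hval] at hv
        exact one_ne_zero hv
      by_contra hj'
      have hcond' : ¬(((i + 1 : ℕ) : ℕ∞) ≤ (n : ℕ∞) + σ'.m ∧ (i + 1 - n) ∈ σ'.I) :=
        fun hc => hj' (hsub ▸ hc.2)
      have hz : smap k n σ' i (f.f i x) = 0 := by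
        simp only [smap, dif_neg hcond', LinearMap.zero_apply]
        rfl
      have hcomm := f.comm_s i x
      rw [SM_s_eq k n σ i, SM_s_eq k n σ' i] at hcomm
      exact hne (hcomm.trans hz)
    · intro hj
      obtain ⟨hj1, hj2⟩ := σ'.hI j hj
      set i := n + (j - 1) with hidef
      have hi1 : i + 1 = n + j := by omega
      have hsub : i + 1 - n = j := by omega
      have hsc1 : ((i + 1 : ℕ) : ℕ∞) ≤ (n : ℕ∞) + σ'.m := by
        rw [hi1]; push_cast; exact add_le_add le_rfl hj2
      have hcond' : ((i + 1 : ℕ) : ℕ∞) ≤ (n : ℕ∞) + σ'.m ∧ (i + 1 - n) ∈ σ'.I :=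
        ⟨hsc1, hsub ▸ hj⟩
      have hni : n ≤ i := by omega
      have hisc : (i : ℕ∞) ≤ (n : ℕ∞) + σ'.m :=
        le_trans (by exact_mod_cast Nat.le_succ i) hsc1
      set y := xg k n σ' i hni hisc with hydef
      obtain ⟨x, hx⟩ := (hbij i).2 y
      by_contra hj'
      have hcond : ¬(((i + 1 : ℕ) : ℕ∞) ≤ (n : ℕ∞) + σ.m ∧ (i + 1 - n) ∈ σ.I) :=
        fun hc => hj' (hsub ▸ hc.2)
      have hz : smap k n σ i x = 0 := by
        simp only [smap, dif_neg hcond, LinearMap.zero_apply]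
        rfl
      have hcomm := f.comm_s i x
      rw [SM_s_eq k n σ i, SM_s_eq k n σ' i] at hcomm
      have h0 : f.f (i + 1) (smap k n σ i x) = 0 := by
        rw [hz]; exact map_zero _
      have h1 : smap k n σ' i y = 0 := by
        rw [← hx]; exact hcomm.symm.trans h0
      have hval : ((smap k n σ' i y : k)) = 1 := by
        simp only [smap, dif_pos hcond', Submodule.coe_inclusion]
        rfl
      rw [h1] at hval
      simp at hval
  refine ⟨rfl, ?_⟩
  obtain ⟨m1, I1, h1⟩ := σ
  obtain ⟨m2, I2, h2⟩ := σ'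
  simp only at hm hIeq
  subst hm
  subst hIeq
  rfl

end Paper
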